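/- arXiv:2309.09913 — 2 statements merged into one kernel-verified Lean document; each statement's English description precedes it below -/
import Mathlib

section
/- (Wielandt–Hoffman) Let A and A+E be symmetric n×n real matrices with eigenvalues λ₁(A) ≥ ⋯ ≥ λ_n(A) and λ₁(A+E) ≥ ⋯ ≥ λ_n(A+E), respectively. Then Σ_{i=1}^n (λ_i(A+E) - λ_i(A))² ≤ ‖E‖_F². -/
/-!
Diagonalize `A = U diag(a) Uᵀ` and `A + E = V diag(b) Vᵀ` with orthogonal `U`, `V`, the
eigenvalues in nonincreasing order. Then `‖E‖_F² = ‖a‖² + ‖b‖² - 2 tr(AB)` and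
`tr(AB) = ∑ᵢⱼ Sᵢⱼ aᵢ bⱼ` with `Sᵢⱼ = (UᵀV)ᵢⱼ²`. Since `UᵀV` is orthogonal, `S` is doubly stochastic,
so by Birkhoff's theorem it is a convex combination of permutation matrices, and the rearrangement
inequality bounds each permuted sum `∑ᵢ aᵢ b_{σ i}` by `∑ᵢ aᵢ bᵢ`. Hence `tr(AB) ≤ ⟨a, b⟩`.
-/

open Finset Matrix

variable {n : Type*} [Fintype n]

theorem Matrix.IsHermitian.sum_sq_eq_trace_mul_self {M : Matrix n n ℝ} (hM : M.IsHermitian) :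
    ∑ i, ∑ j, M i j ^ 2 = trace (M * M) := by
  calc ∑ i, ∑ j, M i j ^ 2 = trace (Mᴴ * M) := by
        simp only [trace, diag, mul_apply, conjTranspose_apply, star_trivial, sq]
        exact sum_comm
    _ = trace (M * M) := by rw [hM.eq]

variable [DecidableEq n]

theorem Monovary.dotProduct_mulVec_le_of_mem_doublyStochastic {R : Type*} [Field R]
    [LinearOrder R] [IsStrictOrderedRing R] {a b : n → R} (hab : Monovary a b)
    {M : Matrix n n R} (hM : M ∈ doublyStochastic R n) :
    a ⬝ᵥ (M *ᵥ b) ≤ a ⬝ᵥ b := by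
  obtain ⟨w, hw0, hw1, rfl⟩ := exists_eq_sum_perm_of_mem_doublyStochastic hM
  calc a ⬝ᵥ ((∑ σ, w σ • σ.permMatrix R) *ᵥ b) = ∑ σ, w σ * ∑ i, a i * b (σ i) := by
        simp only [sum_mulVec, smul_mulVec, permMatrix_mulVec, dotProduct_sum, dotProduct_smul,
          smul_eq_mul]
        rfl
    _ ≤ ∑ σ, w σ * ∑ i, a i * b i :=
        sum_le_sum fun σ _ => mul_le_mul_of_nonneg_left hab.sum_mul_comp_perm_le_sum_mul (hw0 σ)
    _ = a ⬝ᵥ b := by rw [← sum_mul, hw1, one_mul, dotProduct]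

theorem Matrix.map_sq_mem_doublyStochastic {W : Matrix n n ℝ} (hW : W ∈ unitaryGroup n ℝ) :
    W.map (· ^ 2) ∈ doublyStochastic ℝ n := by
  have hrow : ∀ i, ∑ j, W i j ^ 2 = 1 := fun i => by
    simpa [mul_apply, sq] using congr_fun₂ (mem_unitaryGroup_iff.mp hW) i i
  have hcol : ∀ j, ∑ i, W i j ^ 2 = 1 := fun j => by
    simpa [mul_apply, sq] using congr_fun₂ (mem_unitaryGroup_iff'.mp hW) j j
  exact mem_doublyStochastic_iff_sum.mpr ⟨fun i j => sq_nonneg _, hrow, hcol⟩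

theorem Matrix.trace_conj_diagonal_mul_conj_diagonal (U V : Matrix n n ℝ) (a b : n → ℝ) :
    trace (U * diagonal a * star U * (V * diagonal b * star V)) =
      a ⬝ᵥ ((star U * V).map (· ^ 2) *ᵥ b) := by
  set W := star U * V
  have hcycle : trace (U * diagonal a * star U * (V * diagonal b * star V)) =
      trace (diagonal a * W * diagonal b * star W) := by
    simp only [W, star_mul, star_star, Matrix.mul_assoc]
    rw [trace_mul_comm]; simp only [Matrix.mul_assoc]
  rw [hcycle]
  simp only [trace, diag, mul_apply, diagonal_apply, star_apply, star_trivial, dotProduct, mulVec,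
    map_apply, ite_mul, zero_mul, mul_ite, mul_zero, sum_ite_eq, sum_ite_eq', mem_univ, if_true,
    mul_sum]
  exact sum_congr rfl fun i _ => sum_congr rfl fun j _ => by ring

theorem Matrix.IsHermitian.exists_mem_unitaryGroup_eq_conj_diagonal_comp {𝕜 : Type*} [RCLike 𝕜]
    {A : Matrix n n 𝕜} (hA : A.IsHermitian) (e : n ≃ n) :
    ∃ U ∈ unitaryGroup n 𝕜, A = U * diagonal (RCLike.ofReal ∘ hA.eigenvalues ∘ e) * star U := by
  set U : Matrix n n 𝕜 := ↑hA.eigenvectorUnitary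
  have hstar : star (U.submatrix id e) = (star U).submatrix e id := conjTranspose_submatrix _ _ _
  refine ⟨U.submatrix id e, ?_, ?_⟩
  · rw [mem_unitaryGroup_iff, hstar, submatrix_mul_equiv, submatrix_id_id]
    exact mem_unitaryGroup_iff.mp hA.eigenvectorUnitary.2
  · conv_lhs => rw [hA.spectral_theorem, Unitary.conjStarAlgAut_apply]
    rw [hstar, ← Function.comp_assoc, ← submatrix_diagonal_equiv, submatrix_mul_equiv,
      submatrix_mul_equiv, submatrix_id_id]

theorem Monovary.sum_sq_sub_le_sum_sq_sub_conj_diagonal {U V : Matrix n n ℝ}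
    (hU : U ∈ unitaryGroup n ℝ) (hV : V ∈ unitaryGroup n ℝ) {a b : n → ℝ} (hab : Monovary a b) :
    ∑ i, (b i - a i) ^ 2 ≤
      ∑ i, ∑ j, (V * diagonal b * star V - U * diagonal a * star U) i j ^ 2 := by
  set A := U * diagonal a * star U
  set B := V * diagonal b * star V
  have trace_conj_diagonal_sq (W : Matrix n n ℝ) (hW : W ∈ unitaryGroup n ℝ) (d : n → ℝ) :
      trace (W * diagonal d * star W * (W * diagonal d * star W)) = d ⬝ᵥ d := by
    rw [trace_conj_diagonal_mul_conj_diagonal, mem_unitaryGroup_iff'.mp hW,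
      Matrix.map_one _ (by simp) (by simp), one_mulVec]
  have hA : A.IsHermitian := isHermitian_mul_mul_conjTranspose U (isHermitian_diagonal a)
  have hB : B.IsHermitian := isHermitian_mul_mul_conjTranspose V (isHermitian_diagonal b)
  have hAB : trace (A * B) ≤ a ⬝ᵥ b := by
    rw [trace_conj_diagonal_mul_conj_diagonal]
    exact hab.dotProduct_mulVec_le_of_mem_doublyStochastic
      (map_sq_mem_doublyStochastic (mul_mem (Unitary.star_mem hU) hV))
  have hexpand :
      trace ((B - A) * (B - A)) = trace (B * B) - 2 * trace (A * B) + trace (A * A) := by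
    rw [sub_mul, mul_sub, mul_sub, trace_sub, trace_sub, trace_sub, trace_mul_comm B A]
    ring
  calc ∑ i, (b i - a i) ^ 2 = b ⬝ᵥ b - 2 * (a ⬝ᵥ b) + a ⬝ᵥ a := by
        simp only [dotProduct, mul_sum, ← sum_sub_distrib, ← sum_add_distrib]
        exact sum_congr rfl fun i _ => by ring
    _ ≤ trace (B * B) - 2 * trace (A * B) + trace (A * A) := by
        rw [trace_conj_diagonal_sq U hU, trace_conj_diagonal_sq V hV]; linarith
    _ = ∑ i, ∑ j, (B - A) i j ^ 2 := by rw [(hB.sub hA).sum_sq_eq_trace_mul_self, hexpand]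

/-- Wielandt–Hoffman inequality: if `A` and `A + E` are symmetric `n × n` real
matrices with eigenvalues `lamA` and `lamB` listed in nonincreasing order (with
multiplicity), then `∑ᵢ (lamB i - lamA i)² ≤ ‖E‖_F²`. -/
theorem stmt_12 (n : ℕ) (A E : Matrix (Fin n) (Fin n) ℝ)
    (hA : A.IsHermitian) (hAE : (A + E).IsHermitian)
    (lamA lamB : Fin n → ℝ) (hmonoA : Antitone lamA) (hmonoB : Antitone lamB)
    (eA : Fin n ≃ Fin n) (eB : Fin n ≃ Fin n)
    (hlamA : lamA = hA.eigenvalues ∘ eA) (hlamB : lamB = hAE.eigenvalues ∘ eB) :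
    ∑ i, (lamB i - lamA i) ^ 2 ≤ ∑ i, ∑ j, (E i j) ^ 2 := by
  obtain ⟨U, hU, hAU⟩ := hA.exists_mem_unitaryGroup_eq_conj_diagonal_comp eA
  obtain ⟨V, hV, hAEV⟩ := hAE.exists_mem_unitaryGroup_eq_conj_diagonal_comp eB
  simp only [RCLike.ofReal_real_eq_id, Function.id_comp, ← hlamA, ← hlamB] at hAU hAEV
  calc ∑ i, (lamB i - lamA i) ^ 2
      ≤ ∑ i, ∑ j, (V * diagonal lamB * star V - U * diagonal lamA * star U) i j ^ 2 :=
        (hmonoA.monovary hmonoB).sum_sq_sub_le_sum_sq_sub_conj_diagonal hU hV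
    _ = ∑ i, ∑ j, E i j ^ 2 := by rw [← hAU, ← hAEV, add_sub_cancel_left]
end

section
/- Let Φ be a conjunction of M = α·n independent uniformly random k-clauses, and σ⁽¹⁾,…,σ⁽ᵐ⁾ ∈ {0,1}ⁿ fixed assignments with pairwise Hamming distances at least (β-η)n. Then P[Φ(σ⁽ᵗ⁾)=1 for all t] ≤ (1 - m·2^{-k} + C(m,2)·(1-β+η)^k·2^{-k})^{αn}, where C(m,2) = m(m-1)/2. -/
/-!
Clauses are independent, so the number of formulas satisfied by every `σ⁽ᵗ⁾` is the `M`-th power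
of the number `G` of clauses satisfied by every `σ⁽ᵗ⁾`. A clause is falsified by `σ` iff each of
its literals is; `σ` falsifies `n` of the `2n` literals, and a literal is falsified by both `σ` and
`τ` only at a coordinate where they agree, of which there are at most `(1-β+η)n`. The second
Bonferroni inequality bounds the number of clauses falsified by some `σ⁽ᵗ⁾` from below, giving
`G ≤ (2n)ᵏ - m nᵏ + C(m,2) ((1-β+η)n)ᵏ`.
-/

open Finset

section Bonferroni

variable {ι α : Type*} [DecidableEq α]

lemma two_mul_le_two_add_mul_self_sub {d : ℕ} (hd : 1 ≤ d) : 2 * d ≤ 2 + (d * d - d) := by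
  obtain ⟨e, rfl⟩ := Nat.exists_eq_add_of_le' hd
  have : (e + 1) * (e + 1) - (e + 1) = e * e + e := by
    rw [show (e + 1) * (e + 1) = e * e + e + (e + 1) by ring, Nat.add_sub_cancel]
  rw [this]
  nlinarith

/-- Second Bonferroni inequality: an element lying in `d ≥ 1` of the sets is counted `2 d` times
on the left and `2 + d (d - 1)` times on the right. -/
theorem two_mul_sum_card_le_two_mul_card_biUnion_add_sum_card_inter (A : ι → Finset α)
    (s : Finset ι) :
    2 * ∑ t ∈ s, #(A t) ≤ 2 * #(s.biUnion A) + ∑ p ∈ s.offDiag, #(A p.1 ∩ A p.2) := by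
  set U := s.biUnion A
  set d : α → ℕ := fun x => #{t ∈ s | x ∈ A t}
  have hsingle : ∑ t ∈ s, #(A t) = ∑ x ∈ U, d x :=
    calc ∑ t ∈ s, #(A t) = ∑ t ∈ s, #(U.bipartiteAbove (fun t x => x ∈ A t) t) := by
          refine sum_congr rfl fun t ht => ?_
          rw [bipartiteAbove, filter_mem_eq_inter,
            inter_eq_right.2 (subset_biUnion_of_mem A ht)]
      _ = ∑ x ∈ U, d x := sum_card_bipartiteAbove_eq_sum_card_bipartiteBelow _
  have hpair : ∑ p ∈ s.offDiag, #(A p.1 ∩ A p.2) = ∑ x ∈ U, (d x * d x - d x) :=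
    calc ∑ p ∈ s.offDiag, #(A p.1 ∩ A p.2)
        = ∑ p ∈ s.offDiag, #(U.bipartiteAbove (fun p x => x ∈ A p.1 ∩ A p.2) p) := by
          refine sum_congr rfl fun p hp => ?_
          rw [bipartiteAbove, filter_mem_eq_inter, inter_eq_right.2
            (inter_subset_left.trans (subset_biUnion_of_mem A (mem_offDiag.1 hp).1))]
      _ = ∑ x ∈ U, #(s.offDiag.bipartiteBelow (fun p x => x ∈ A p.1 ∩ A p.2) x) :=
          sum_card_bipartiteAbove_eq_sum_card_bipartiteBelow _
      _ = ∑ x ∈ U, (d x * d x - d x) := by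
          refine sum_congr rfl fun x _ => ?_
          rw [← offDiag_card]
          congr 1
          ext p
          simp only [bipartiteBelow, mem_filter, mem_offDiag, mem_inter]
          tauto
  rw [hsingle, hpair, card_eq_sum_ones, mul_sum, mul_sum, ← sum_add_distrib]
  refine sum_le_sum fun x hx => two_mul_le_two_add_mul_self_sub ?_
  obtain ⟨t, ht, hxt⟩ := mem_biUnion.1 hx
  exact card_pos.2 ⟨t, mem_filter.2 ⟨ht, hxt⟩⟩


lemma card_filter_eq_add_hammingDist {ι : Type*} [Fintype ι] {β : ι → Type*}
    [∀ i, DecidableEq (β i)] (x y : ∀ i, β i) :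
    #{i | x i = y i} + hammingDist x y = Fintype.card ι :=
  card_filter_add_card_filter_not _

section Clauses

variable {V : Type*} [Fintype V] [DecidableEq V]

def falsifiedLiterals (σ : V → Bool) : Finset (V × Bool) := {p | σ p.1 ≠ p.2}

lemma falsifiedLiterals_inter (σ τ : V → Bool) :
    falsifiedLiterals σ ∩ falsifiedLiterals τ = image (fun i => (i, !σ i)) {i | σ i = τ i} := by
  ext ⟨i, b⟩
  simp only [falsifiedLiterals, mem_inter, mem_filter, mem_univ, true_and, mem_image,
    Prod.mk.injEq]
  constructor
  · rintro ⟨hσ, hτ⟩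
    exact ⟨i, by revert hσ hτ; cases σ i <;> cases τ i <;> cases b <;> simp, rfl,
      by revert hσ; cases σ i <;> cases b <;> simp⟩
  · rintro ⟨i, he, rfl, rfl⟩
    rw [← he]
    cases σ i <;> simp

lemma card_falsifiedLiterals_inter (σ τ : V → Bool) :
    #(falsifiedLiterals σ ∩ falsifiedLiterals τ) = #{i | σ i = τ i} := by
  rw [falsifiedLiterals_inter, card_image_of_injective _ fun i j h => congrArg Prod.fst h]

lemma card_falsifiedLiterals (σ : V → Bool) : #(falsifiedLiterals σ) = Fintype.card V := by
  simpa using card_falsifiedLiterals_inter σ σ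

def falsifiedClauses (k : ℕ) (σ : V → Bool) : Finset (Fin k → V × Bool) :=
  Fintype.piFinset fun _ => falsifiedLiterals σ

lemma card_falsifiedClauses (k : ℕ) (σ : V → Bool) :
    #(falsifiedClauses k σ) = Fintype.card V ^ k := by
  simp [falsifiedClauses, card_falsifiedLiterals]

lemma card_falsifiedClauses_inter (k : ℕ) (σ τ : V → Bool) :
    #(falsifiedClauses k σ ∩ falsifiedClauses k τ) = #{i | σ i = τ i} ^ k := by
  simp [falsifiedClauses, ← Fintype.piFinset_inter, card_falsifiedLiterals_inter]


lemma card_compl_biUnion_falsifiedClauses_le {ι : Type*} [Fintype ι] (k : ℕ) (σ : ι → V → Bool)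
    (a : ℝ) (hagree : ∀ t l, t ≠ l → (#{i | σ t i = σ l i} : ℝ) ≤ a) :
    (#(univ.biUnion fun t => falsifiedClauses k (σ t))ᶜ : ℝ) ≤
      (2 * Fintype.card V) ^ k - Fintype.card ι * (Fintype.card V : ℝ) ^ k +
        Fintype.card ι * (Fintype.card ι - 1) / 2 * a ^ k := by
  set F := fun t => falsifiedClauses k (σ t)
  have hbonf : 2 * ∑ t, (#(F t) : ℝ) ≤
      2 * #(univ.biUnion F) + ∑ p ∈ univ.offDiag, (#(F p.1 ∩ F p.2) : ℝ) := by
    exact_mod_cast two_mul_sum_card_le_two_mul_card_biUnion_add_sum_card_inter F univ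
  have hsingle : ∑ t, (#(F t) : ℝ) = Fintype.card ι * (Fintype.card V : ℝ) ^ k := by
    simp [F, card_falsifiedClauses]
  have hpair : ∑ p ∈ univ.offDiag, (#(F p.1 ∩ F p.2) : ℝ) ≤
      Fintype.card ι * (Fintype.card ι - 1) * a ^ k :=
    calc ∑ p ∈ univ.offDiag, (#(F p.1 ∩ F p.2) : ℝ) ≤ ∑ _p ∈ univ.offDiag, a ^ k := by
          refine sum_le_sum fun p hp => ?_
          rw [card_falsifiedClauses_inter, Nat.cast_pow]
          exact pow_le_pow_left₀ (Nat.cast_nonneg _) (hagree _ _ (mem_offDiag.1 hp).2.2) k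
      _ = Fintype.card ι * (Fintype.card ι - 1) * a ^ k := by
          rw [sum_const, nsmul_eq_mul, offDiag_card, card_univ,
            Nat.cast_sub (Nat.le_mul_self _)]
          push_cast
          ring
  have htotal : (Fintype.card (Fin k → V × Bool) : ℝ) = (2 * Fintype.card V) ^ k := by
    simp [mul_comm]
  rw [card_compl, Nat.cast_sub (card_le_univ _), htotal]
  linarith

end Clauses

theorem stmt_19_general (n k m M : ℕ) (hn : 0 < n) (β η : ℝ)
    (σ : Fin m → Fin n → Bool)
    (hdist : ∀ t l : Fin m, t ≠ l →
      (β - η) * n ≤ (hammingDist (σ t) (σ l) : ℝ)) :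
    ((Finset.univ.filter (fun c : Fin M → Fin k → Fin n × Bool =>
        ∀ (t : Fin m) (j : Fin M), ∃ l : Fin k,
          (σ t) ((c j l).1) = ((c j l).2))).card : ℝ) /
      ((2 * n : ℝ)) ^ (k * M) ≤
      (1 - m * (2 : ℝ) ^ (-(k : ℤ)) +
          (m * (m - 1) / 2) * (1 - β + η) ^ k * (2 : ℝ) ^ (-(k : ℤ))) ^ M := by
  set G := (univ.biUnion fun t => falsifiedClauses k (σ t))ᶜ
  have hformula : univ.filter (fun c : Fin M → Fin k → Fin n × Bool =>
      ∀ (t : Fin m) (j : Fin M), ∃ l : Fin k, (σ t) ((c j l).1) = ((c j l).2)) =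
      Fintype.piFinset fun _ => G := by
    ext c
    simp [G, falsifiedClauses, falsifiedLiterals, forall_comm (α := Fin m)]
  have hagree : ∀ t l, t ≠ l → (#{i | σ t i = σ l i} : ℝ) ≤ (1 - β + η) * n := by
    intro t l htl
    have := congrArg (Nat.cast (R := ℝ)) (card_filter_eq_add_hammingDist (σ t) (σ l))
    push_cast [Fintype.card_fin] at this
    linarith [hdist t l htl]
  have hclause : (#G : ℝ) / (2 * n) ^ k ≤
      1 - m * (2 : ℝ) ^ (-(k : ℤ)) + m * (m - 1) / 2 * (1 - β + η) ^ k * 2 ^ (-(k : ℤ)) := by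
    rw [div_le_iff₀ (by positivity)]
    refine (card_compl_biUnion_falsifiedClauses_le k σ _ hagree).trans_eq ?_
    simp only [Fintype.card_fin, zpow_neg, zpow_natCast, mul_pow]
    field_simp
  rw [hformula, Fintype.card_piFinset_const, Nat.cast_pow, pow_mul, ← div_pow]
  exact pow_le_pow_left₀ (by positivity) hclause M

/-- Let `Φ` be a conjunction of `M = α n` independent uniformly random
`k`-clauses (a clause is a `k`-tuple of literals; a literal `(i,b)` is satisfied
by `σ` iff `σ i = b`; `Φ(σ)=1` iff every clause contains a satisfied literal),
and let `σ⁽¹⁾,…,σ⁽ᵐ⁾ ∈ {0,1}ⁿ` have pairwise Hamming distances at least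
`(β-η)n`. Then (probability written as the counting fraction over the uniform
formula space)
`P[Φ(σ⁽ᵗ⁾)=1 ∀t] ≤ (1 - m 2⁻ᵏ + (m(m-1)/2)(1-β+η)ᵏ 2⁻ᵏ)^{αn}`. -/
theorem stmt_19 (n k m M : ℕ) (hn : 0 < n) (α β η : ℝ)
    (hη : 0 < η) (hηβ : η < β) (hβ : β < 1)
    (hM : (M : ℝ) = α * n)
    (σ : Fin m → Fin n → Bool)
    (hdist : ∀ t l : Fin m, t ≠ l →
      (β - η) * n ≤ (hammingDist (σ t) (σ l) : ℝ)) :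
    ((Finset.univ.filter (fun c : Fin M → Fin k → Fin n × Bool =>
        ∀ (t : Fin m) (j : Fin M), ∃ l : Fin k,
          (σ t) ((c j l).1) = ((c j l).2))).card : ℝ) /
      ((2 * n : ℝ)) ^ (k * M) ≤
      (1 - m * (2 : ℝ) ^ (-(k : ℤ)) +
          (m * (m - 1) / 2) * (1 - β + η) ^ k * (2 : ℝ) ^ (-(k : ℤ))) ^ M :=
  stmt_19_general n k m M hn β η σ hdist
end Bonferroni
end
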